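/- arXiv:2504.14646 — 2 statements merged into one kernel-verified Lean document; each statement's English description precedes it below -/
import Mathlib

section
/- Let Q be a finite right Bol loop of odd order and let H be a normal subloop of Q with |H| = 3. Then H ⊆ Z(Q). -/
/-- A loop: a set with binary operation and identity element in which all left and
right translations are bijective. -/
class QLoop (Q : Type*) extends Mul Q, One Q where
  one_mul : ∀ x : Q, 1 * x = x
  mul_one : ∀ x : Q, x * 1 = x
  bij_left : ∀ a : Q, Function.Bijective (fun x : Q => a * x)
  bij_right : ∀ a : Q, Function.Bijective (fun x : Q => x * a)

/-- The right Bol identity. -/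
def IsRightBol (Q : Type*) [QLoop Q] : Prop :=
  ∀ x y z : Q, ((x * y) * z) * y = x * ((y * z) * y)

/-- Left translation as a permutation. -/
noncomputable def Lt {Q : Type*} [QLoop Q] (a : Q) : Equiv.Perm Q :=
  Equiv.ofBijective (fun x : Q => a * x) (QLoop.bij_left a)

/-- Right translation as a permutation. -/
noncomputable def Rt {Q : Type*} [QLoop Q] (a : Q) : Equiv.Perm Q :=
  Equiv.ofBijective (fun x : Q => x * a) (QLoop.bij_right a)

/-- The right multiplication group. -/
noncomputable def rightMultGroup (Q : Type*) [QLoop Q] : Subgroup (Equiv.Perm Q) :=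
  Subgroup.closure (Set.range (Rt : Q → Equiv.Perm Q))

/-- The right inner mapping group, generated by R_{x,y} = R_{y x}⁻¹ ∘ R_x ∘ R_y. -/
noncomputable def rightInn (Q : Type*) [QLoop Q] : Subgroup (Equiv.Perm Q) :=
  Subgroup.closure { φ : Equiv.Perm Q | ∃ x y : Q, φ = (Rt (y * x))⁻¹ * Rt x * Rt y }

/-- The inner mapping group, generated by R_{x,y}, L_{x,y} and T_x. -/
noncomputable def innGroup (Q : Type*) [QLoop Q] : Subgroup (Equiv.Perm Q) :=
  Subgroup.closure
    ({ φ : Equiv.Perm Q | ∃ x y : Q, φ = (Rt (y * x))⁻¹ * Rt x * Rt y } ∪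
     { φ : Equiv.Perm Q | ∃ x y : Q, φ = (Lt (x * y))⁻¹ * Lt x * Lt y } ∪
     { φ : Equiv.Perm Q | ∃ x : Q, φ = (Lt x)⁻¹ * Rt x })

/-- A subloop: contains 1, closed under multiplication and both divisions. -/
structure IsSubloop {Q : Type*} [QLoop Q] (S : Set Q) : Prop where
  one_mem : (1 : Q) ∈ S
  mul_mem : ∀ ⦃a b : Q⦄, a ∈ S → b ∈ S → a * b ∈ S
  ldiv_mem : ∀ ⦃a x : Q⦄, a ∈ S → a * x ∈ S → x ∈ S
  rdiv_mem : ∀ ⦃a y : Q⦄, a ∈ S → y * a ∈ S → y ∈ S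

/-- A normal subloop: a subloop invariant under all inner mappings. -/
def IsNormalSubloop {Q : Type*} [QLoop Q] (S : Set Q) : Prop :=
  IsSubloop S ∧ ∀ φ ∈ innGroup Q, (φ : Equiv.Perm Q) '' S = S

/-- The commutant. -/
def commutant (Q : Type*) [QLoop Q] : Set Q := { a : Q | ∀ y : Q, a * y = y * a }

/-- The left nucleus. -/
def leftNucleus (Q : Type*) [QLoop Q] : Set Q :=
  { a : Q | ∀ y z : Q, a * (y * z) = (a * y) * z }

/-- The center. -/
def loopCenter (Q : Type*) [QLoop Q] : Set Q :=
  { a : Q | ∀ y z : Q, a * y = y * a ∧ a * (y * z) = (a * y) * z ∧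
      y * (a * z) = (y * a) * z ∧ y * (z * a) = (y * z) * a }

/-- Powers: x^0 = 1, x^{n+1} = x^n * x. -/
def lpow {Q : Type*} [QLoop Q] (x : Q) : ℕ → Q
  | 0 => 1
  | n + 1 => lpow x n * x

/-- The subloop generated by an element. -/
def subloopClosure {Q : Type*} [QLoop Q] (x : Q) : Set Q :=
  ⋂₀ { S : Set Q | IsSubloop S ∧ x ∈ S }

/-- Power associativity: the subloop generated by any element is associative. -/
def PowerAssociative (Q : Type*) [QLoop Q] : Prop :=
  ∀ x : Q, ∀ a ∈ subloopClosure x, ∀ b ∈ subloopClosure x, ∀ c ∈ subloopClosure x,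
    a * (b * c) = (a * b) * c


/-!
Write `H = {1, a, a²}` with exponents in `ZMod 3`. Every inner mapping fixes `1` and permutes `H`,
so it acts on exponents as multiplication by a unit `±1`; call these units `τ x`, `ρ x y`, `λ x y`
for `T_x`, `R_{x,y}`, `L_{x,y}`. Moving `a` to the right through both sides of the Bol identity
`((w a) y) a = w ((a y) a)` gives `τ(wy) ρ(w,y) τ(w) + 1 = λ(w,y) (τ(y) + 1)` in `ZMod 3`, which
forces `τ(wy) ρ(w,y) τ(w) = τ(y)`. Right alternativity gives `R_{x,x} = 1`, hence `τ(x²) = 1`.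
In a Bol loop of odd order there are no involutions, so every `R_u` has odd order and every
element is a square; thus `τ = 1`, then `ρ = 1` and `λ = 1`, i.e. `a` commutes with everything
and lies in the left and right nuclei, hence in the center. Any element `≠ 1` of `H` can play the
role of `a`.
-/

open Equiv

namespace QLoop

variable {Q : Type*} [QLoop Q]

theorem mul_left_cancel_iff {a x y : Q} : a * x = a * y ↔ x = y :=
  (bij_left a).injective.eq_iff

theorem mul_right_cancel_iff {a x y : Q} : x * a = y * a ↔ x = y :=
  (bij_right a).injective.eq_iff

@[simp]
theorem mul_eq_left_iff {a b : Q} : a * b = a ↔ b = 1 := by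
  have h := @mul_left_cancel_iff _ _ a b 1
  rwa [QLoop.mul_one] at h

@[simp]
theorem mul_eq_right_iff {a b : Q} : a * b = b ↔ a = 1 := by
  have h := @mul_right_cancel_iff _ _ b a 1
  rwa [QLoop.one_mul] at h

@[simp]
theorem Rt_apply (a u : Q) : Rt a u = u * a := rfl

@[simp]
theorem Lt_apply (a u : Q) : Lt a u = a * u := rfl

noncomputable def innerR (x y : Q) : Perm Q := (Rt (x * y))⁻¹ * Rt y * Rt x

noncomputable def innerL (x y : Q) : Perm Q := (Lt (x * y))⁻¹ * Lt x * Lt y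

noncomputable def innerT (x : Q) : Perm Q := (Lt x)⁻¹ * Rt x

theorem mul_mul_eq_innerR_mul (u x y : Q) : u * x * y = innerR x y u * (x * y) := by
  simp [innerR, ← Rt_apply (x * y), Perm.mul_apply]

theorem mul_mul_eq_mul_innerL (u x y : Q) : x * (y * u) = x * y * innerL x y u := by
  simp [innerL, ← Lt_apply (x * y), Perm.mul_apply]

theorem mul_eq_mul_innerT (u x : Q) : u * x = x * innerT x u := by
  simp [innerT, ← Lt_apply x, Perm.mul_apply]

theorem innerR_apply_one (x y : Q) : innerR x y 1 = 1 := by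
  have h := mul_mul_eq_innerR_mul 1 x y
  rwa [QLoop.one_mul, eq_comm, mul_eq_right_iff] at h

theorem innerL_apply_one (x y : Q) : innerL x y 1 = 1 := by
  have h := mul_mul_eq_mul_innerL 1 x y
  rwa [QLoop.mul_one, eq_comm, mul_eq_left_iff] at h

theorem innerT_apply_one (x : Q) : innerT x 1 = 1 := by
  have h := mul_eq_mul_innerT 1 x
  rwa [QLoop.one_mul, eq_comm, mul_eq_left_iff] at h

theorem innerR_mem (x y : Q) : innerR x y ∈ innGroup Q :=
  Subgroup.subset_closure (Or.inl (Or.inl ⟨y, x, rfl⟩))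

theorem innerL_mem (x y : Q) : innerL x y ∈ innGroup Q :=
  Subgroup.subset_closure (Or.inl (Or.inr ⟨x, y, rfl⟩))

theorem innerT_mem (x : Q) : innerT x ∈ innGroup Q :=
  Subgroup.subset_closure (Or.inr ⟨x, rfl⟩)

theorem one_mem_loopCenter : (1 : Q) ∈ loopCenter Q := fun y z => by
  simp only [QLoop.one_mul, QLoop.mul_one, and_self]

theorem mem_loopCenter_of_nuclear {a : Q} (hcomm : ∀ y, a * y = y * a)
    (hleft : ∀ y z, a * (y * z) = a * y * z) (hright : ∀ y z, y * (z * a) = y * z * a) :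
    a ∈ loopCenter Q := fun y z => by
  refine ⟨hcomm y, hleft y z, ?_, hright y z⟩
  calc y * (a * z) = y * (z * a) := by rw [hcomm]
    _ = y * z * a := hright y z
    _ = a * (y * z) := (hcomm _).symm
    _ = a * y * z := hleft y z
    _ = y * a * z := by rw [hcomm]

end QLoop

theorem Set.exists_eq_insert_insert_of_ncard_eq_three {α : Type*} {s : Set α} (hs : s.ncard = 3)
    {a b : α} (ha : a ∈ s) (hb : b ∈ s) (hab : a ≠ b) : ∃ c, c ≠ a ∧ c ≠ b ∧ s = {a, b, c} := by
  have hsub : ({a, b} : Set α) ⊆ s := Set.insert_subset ha (Set.singleton_subset_iff.mpr hb)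
  obtain ⟨c, hc⟩ := Set.ncard_eq_one.mp
    (by rw [Set.ncard_sdiff hsub, hs, Set.ncard_pair hab] : (s \ {a, b}).ncard = 1)
  have hcs : c ∈ s \ {a, b} := hc ▸ rfl
  simp only [Set.mem_sdiff, Set.mem_insert_iff, Set.mem_singleton_iff, not_or] at hcs
  refine ⟨c, hcs.2.1, hcs.2.2, ?_⟩
  rw [← Set.union_sdiff_cancel hsub, hc, Set.insert_union, Set.singleton_union]

theorem IsSubloop.mul_self_eq_of_eq_insert {Q : Type*} [QLoop Q] {a x : Q}
    (hS : IsSubloop ({1, a, x} : Set Q))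
    (ha : a ≠ 1) (hx : x ≠ 1) (hxa : x ≠ a) : a * a = x ∧ a * a * a = 1 := by
  have haa := hS.mul_mem (a := a) (b := a) (by simp) (by simp)
  have hxa' := hS.mul_mem (a := x) (b := a) (by simp) (by simp)
  simp only [Set.mem_insert_iff, Set.mem_singleton_iff] at haa hxa'
  rcases haa with h | h | rfl
  · exfalso
    rcases hxa' with h' | h' | h'
    · exact hxa (QLoop.mul_right_cancel_iff.mp (h'.trans h.symm))
    · exact hx (QLoop.mul_eq_right_iff.mp h')
    · exact ha (QLoop.mul_eq_left_iff.mp h')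
  · exact absurd (QLoop.mul_eq_left_iff.mp h) ha
  · refine ⟨rfl, ?_⟩
    rcases hxa' with h' | h' | h'
    · exact h'
    · exact absurd (QLoop.mul_eq_right_iff.mp h') hx
    · exact absurd (QLoop.mul_eq_left_iff.mp h') ha

namespace IsRightBol

variable {Q : Type*} [QLoop Q]

theorem mul_mul_self (hbol : IsRightBol Q) (x y : Q) : x * y * y = x * (y * y) := by
  simpa only [QLoop.mul_one] using hbol x y 1

theorem innerR_self (hbol : IsRightBol Q) (x : Q) : QLoop.innerR x x = 1 := by
  ext u
  have h := QLoop.mul_mul_eq_innerR_mul u x x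
  rw [hbol.mul_mul_self, QLoop.mul_right_cancel_iff] at h
  exact h.symm

theorem mul_lpow (hbol : IsRightBol Q) (x y : Q) (n : ℕ) : x * lpow y n = (Rt y ^ n) x := by
  induction n using Nat.strong_induction_on generalizing x with
  | _ n ih =>
    match n with
    | 0 => exact QLoop.mul_one x
    | 1 => exact congrArg (x * ·) (QLoop.one_mul y)
    | n + 2 =>
      have hy : y * lpow y n = lpow y (n + 1) := by
        rw [ih n (by omega), ← QLoop.one_mul (lpow y (n + 1)), ih (n + 1) (by omega), pow_succ,
          Perm.mul_apply, QLoop.Rt_apply, QLoop.one_mul]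
      calc x * lpow y (n + 2) = x * (y * lpow y n * y) := by rw [hy]; rfl
        _ = x * y * lpow y n * y := (hbol x y _).symm
        _ = (Rt y ^ (n + 2)) x := by rw [ih n (by omega), pow_succ, pow_succ']; rfl

theorem lpow_eq_apply_one (hbol : IsRightBol Q) (y : Q) (n : ℕ) : lpow y n = (Rt y ^ n) 1 := by
  rw [← hbol.mul_lpow, QLoop.one_mul]

theorem lpow_add (hbol : IsRightBol Q) (y : Q) (m n : ℕ) :
    lpow y m * lpow y n = lpow y (m + n) := by
  rw [hbol.mul_lpow, hbol.lpow_eq_apply_one y m, hbol.lpow_eq_apply_one y (m + n), add_comm,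
    pow_add, Perm.mul_apply]

theorem lpow_eq_one_iff (hbol : IsRightBol Q) (y : Q) (n : ℕ) : lpow y n = 1 ↔ Rt y ^ n = 1 := by
  refine ⟨fun h => Equiv.ext fun x => ?_, fun h => ?_⟩
  · rw [← hbol.mul_lpow, h, QLoop.mul_one]
    rfl
  · rw [hbol.lpow_eq_apply_one, h]
    rfl

theorem eq_one_of_mul_self_eq_one [Finite Q] (hbol : IsRightBol Q) (hodd : Odd (Nat.card Q))
    {w : Q} (hw : w * w = 1) : w = 1 := by
  let : Fintype Q := Fintype.ofFinite Q
  have hsq : Rt w ^ 2 ^ 1 = 1 := Equiv.ext fun u => by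
    simp [sq, Perm.mul_apply, hbol.mul_mul_self, hw, QLoop.mul_one]
  have hcard : ¬ 2 ∣ Fintype.card Q := by
    rw [← Nat.card_eq_fintype_card, ← even_iff_two_dvd, Nat.not_even_iff_odd]
    exact hodd
  obtain ⟨u, hu⟩ := Perm.exists_fixed_point_of_prime hcard hsq
  exact QLoop.mul_eq_left_iff.mp hu

theorem odd_orderOf_Rt [Finite Q] (hbol : IsRightBol Q) (hodd : Odd (Nat.card Q)) (y : Q) :
    Odd (orderOf (Rt y)) := by
  have hpos := orderOf_pos (Rt y)
  by_contra heven
  obtain ⟨m, hm⟩ := Nat.not_odd_iff_even.mp heven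
  have hm1 : lpow y m = 1 := hbol.eq_one_of_mul_self_eq_one hodd <| by
    rw [hbol.lpow_add, ← hm, hbol.lpow_eq_one_iff]
    exact pow_orderOf_eq_one _
  have := orderOf_le_of_pow_eq_one (by omega) ((hbol.lpow_eq_one_iff y m).mp hm1)
  omega

theorem exists_mul_self_eq [Finite Q] (hbol : IsRightBol Q) (hodd : Odd (Nat.card Q)) (u : Q) :
    ∃ s, s * s = u := by
  obtain ⟨k, hk⟩ := hbol.odd_orderOf_Rt hodd u
  refine ⟨lpow u (k + 1), ?_⟩
  rw [hbol.lpow_add, show k + 1 + (k + 1) = orderOf (Rt u) + 1 by omega, lpow,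
    (hbol.lpow_eq_one_iff u _).mpr (pow_orderOf_eq_one _), QLoop.one_mul]

end IsRightBol

theorem ZMod.units_three_mul_self (u : (ZMod 3)ˣ) : (u : ZMod 3) * u = 1 := by
  revert u
  decide

theorem ZMod.units_three_eq_of_add_one_eq_mul (X u v : (ZMod 3)ˣ)
    (h : (X : ZMod 3) + 1 = v * (u + 1)) : X = u := by
  revert X u v
  decide

theorem ZMod.units_three_eq_one_of_add_one_eq_mul (v : (ZMod 3)ˣ)
    (h : (1 + 1 : ZMod 3) = v * (1 + 1)) : v = 1 := by
  revert v
  decide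

theorem ZMod.three_cases (i : ZMod 3) : i = 0 ∨ i = 1 ∨ i = 2 := by
  revert i
  decide

open scoped Classical in
/-- An inner mapping `φ` of a loop with a normal subloop `{1, a, a²}` of order 3 acts on the
exponents `ZMod 3` as multiplication by the unit `twist a φ` (see `twist_spec`). -/
noncomputable def twist {α : Type*} (a : α) (φ : Perm α) : (ZMod 3)ˣ := if φ a = a then 1 else -1

@[simp]
theorem twist_one {α : Type*} (a : α) : twist a 1 = 1 := if_pos rfl

section OrderThree

variable {Q : Type*} [QLoop Q]

open QLoop

def pow3 (a : Q) (i : ZMod 3) : Q := lpow a i.val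

@[simp]
theorem pow3_zero (a : Q) : pow3 a 0 = 1 := rfl

@[simp]
theorem pow3_one (a : Q) : pow3 a 1 = a := QLoop.one_mul a

@[simp]
theorem pow3_two (a : Q) : pow3 a 2 = a * a := congrArg (· * a) (QLoop.one_mul a)

structure IsNormalOrderThree (a : Q) : Prop where
  ne_one : a ≠ 1
  mul_self_ne_one : a * a ≠ 1
  mul_self_mul_self : a * a * a = 1
  isNormalSubloop : IsNormalSubloop ({1, a, a * a} : Set Q)

namespace IsNormalOrderThree

variable {a : Q}

theorem mul_self_ne (h : IsNormalOrderThree a) : a * a ≠ a :=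
  fun e => h.ne_one (QLoop.mul_eq_left_iff.mp e)

theorem pow3_injective (h : IsNormalOrderThree a) : Function.Injective (pow3 a) := by
  have := h.ne_one
  have := h.mul_self_ne_one
  have := h.mul_self_ne
  intro i j hij
  rcases ZMod.three_cases i with rfl | rfl | rfl <;>
    rcases ZMod.three_cases j with rfl | rfl | rfl <;>
    simp only [pow3_zero, pow3_one, pow3_two] at hij <;>
    first | rfl | exact absurd hij ‹_› | exact absurd hij.symm ‹_›

theorem map_mem (h : IsNormalOrderThree a) {φ : Perm Q} (hφ : φ ∈ innGroup Q) {x : Q}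
    (hx : x ∈ ({1, a, a * a} : Set Q)) : φ x ∈ ({1, a, a * a} : Set Q) :=
  h.isNormalSubloop.2 φ hφ ▸ Set.mem_image_of_mem φ hx

theorem twist_spec (h : IsNormalOrderThree a) {φ : Perm Q} (hφ : φ ∈ innGroup Q) (hφ1 : φ 1 = 1)
    (i : ZMod 3) : φ (pow3 a i) = pow3 a (twist a φ * i) := by
  have ha := h.map_mem hφ (x := a) (by simp)
  have hb := h.map_mem hφ (x := a * a) (by simp)
  have hna : φ a ≠ 1 := hφ1 ▸ φ.injective.ne h.ne_one
  have hnb : φ (a * a) ≠ 1 := hφ1 ▸ φ.injective.ne h.mul_self_ne_one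
  have hab : φ a ≠ φ (a * a) := φ.injective.ne h.mul_self_ne.symm
  simp only [Set.mem_insert_iff, Set.mem_singleton_iff] at ha hb
  obtain ⟨h1, h2⟩ | ⟨h1, h2⟩ : φ a = a ∧ φ (a * a) = a * a ∨ φ a = a * a ∧ φ (a * a) = a := by
    rcases ha with ha | ha | ha <;> rcases hb with hb | hb | hb <;>
      first
      | exact absurd ha hna
      | exact absurd hb hnb
      | exact absurd (ha.trans hb.symm) hab
      | tauto
  · rw [twist, if_pos h1]
    rcases ZMod.three_cases i with rfl | rfl | rfl <;> simp [hφ1, h1, h2]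
  · rw [twist, if_neg (h1 ▸ h.mul_self_ne)]
    rcases ZMod.three_cases i with rfl | rfl | rfl <;>
      simp [hφ1, h1, h2, show (-1 : ZMod 3) = 2 by decide, show (2 * 2 : ZMod 3) = 1 by decide]

theorem pow3_mul_eq_mul_pow3 (h : IsNormalOrderThree a) (z : Q) (k : ZMod 3) :
    pow3 a k * z = z * pow3 a (twist a (innerT z) * k) := by
  rw [mul_eq_mul_innerT, h.twist_spec (innerT_mem z) (innerT_apply_one z)]

theorem pow3_mul_mul (h : IsNormalOrderThree a) (x y : Q) (i : ZMod 3) :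
    pow3 a i * x * y = pow3 a (twist a (innerR x y) * i) * (x * y) := by
  rw [mul_mul_eq_innerR_mul, h.twist_spec (innerR_mem x y) (innerR_apply_one x y)]

theorem mul_mul_pow3 (h : IsNormalOrderThree a) (x y : Q) (i : ZMod 3) :
    x * (y * pow3 a i) = x * y * pow3 a (twist a (innerL x y) * i) := by
  rw [mul_mul_eq_mul_innerL, h.twist_spec (innerL_mem x y) (innerL_apply_one x y)]

theorem mul_pow3_mul (h : IsNormalOrderThree a) (hbol : IsRightBol Q) (z : Q) (j : ZMod 3) :
    z * pow3 a j * a = z * pow3 a (j + 1) := by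
  rcases ZMod.three_cases j with rfl | rfl | rfl
  · simp [QLoop.mul_one]
  · simp [hbol.mul_mul_self, show (1 + 1 : ZMod 3) = 2 by decide]
  · rw [show (2 + 1 : ZMod 3) = 0 by decide, pow3_two, pow3_zero, ← hbol.mul_mul_self, hbol z a a,
      h.mul_self_mul_self]

theorem twist_identity (h : IsNormalOrderThree a) (hbol : IsRightBol Q) (w y : Q) :
    (twist a (innerT (w * y)) * twist a (innerR w y) * twist a (innerT w) : ZMod 3) + 1 =
      twist a (innerL w y) * (twist a (innerT y) + 1) := by
  have hw : w * a = pow3 a (twist a (innerT w)) * w := by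
    rw [h.pow3_mul_eq_mul_pow3, ZMod.units_three_mul_self, pow3_one]
  have hy : a * y = y * pow3 a (twist a (innerT y)) := by
    simpa using h.pow3_mul_eq_mul_pow3 y 1
  set twy := twist a (innerT (w * y))
  set r := twist a (innerR w y)
  set tw := twist a (innerT w)
  set ty := twist a (innerT y)
  apply h.pow3_injective
  apply (QLoop.mul_left_cancel_iff (a := w * y)).mp
  calc w * y * pow3 a (twy * r * tw + 1)
      = w * y * pow3 a (twy * (r * tw)) * a := by rw [h.mul_pow3_mul hbol, mul_assoc]
    _ = pow3 a (r * tw) * (w * y) * a := by rw [h.pow3_mul_eq_mul_pow3]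
    _ = w * a * y * a := by rw [hw, h.pow3_mul_mul w y]
    _ = w * (a * y * a) := hbol w a y
    _ = w * (y * pow3 a (ty + 1)) := by rw [hy, h.mul_pow3_mul hbol]
    _ = w * y * pow3 a (twist a (innerL w y) * (ty + 1)) := h.mul_mul_pow3 w y _

theorem twist_innerT_mul (h : IsNormalOrderThree a) (hbol : IsRightBol Q) (w y : Q) :
    twist a (innerT (w * y)) * twist a (innerR w y) * twist a (innerT w) = twist a (innerT y) :=
  ZMod.units_three_eq_of_add_one_eq_mul _ _ _ (by push_cast; exact h.twist_identity hbol w y)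

theorem twist_innerT_mul_self (h : IsNormalOrderThree a) (hbol : IsRightBol Q) (x : Q) :
    twist a (innerT (x * x)) = 1 := by
  simpa [hbol.innerR_self] using h.twist_innerT_mul hbol x x

variable [Finite Q]

theorem twist_innerT_eq_one (h : IsNormalOrderThree a) (hbol : IsRightBol Q)
    (hodd : Odd (Nat.card Q)) (z : Q) : twist a (innerT z) = 1 := by
  obtain ⟨s, rfl⟩ := hbol.exists_mul_self_eq hodd z
  exact h.twist_innerT_mul_self hbol s

theorem twist_innerR_eq_one (h : IsNormalOrderThree a) (hbol : IsRightBol Q)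
    (hodd : Odd (Nat.card Q)) (x y : Q) : twist a (innerR x y) = 1 := by
  simpa [h.twist_innerT_eq_one hbol hodd] using h.twist_innerT_mul hbol x y

theorem twist_innerL_eq_one (h : IsNormalOrderThree a) (hbol : IsRightBol Q)
    (hodd : Odd (Nat.card Q)) (x y : Q) : twist a (innerL x y) = 1 :=
  ZMod.units_three_eq_one_of_add_one_eq_mul _ (by
    simpa [h.twist_innerT_eq_one hbol hodd, h.twist_innerR_eq_one hbol hodd] using
      h.twist_identity hbol x y)

theorem mem_loopCenter (h : IsNormalOrderThree a) (hbol : IsRightBol Q)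
    (hodd : Odd (Nat.card Q)) : a ∈ loopCenter Q := by
  refine mem_loopCenter_of_nuclear (fun y => ?_) (fun y z => ?_) (fun y z => ?_)
  · simpa [h.twist_innerT_eq_one hbol hodd] using h.pow3_mul_eq_mul_pow3 y 1
  · simpa [h.twist_innerR_eq_one hbol hodd] using (h.pow3_mul_mul y z 1).symm
  · simpa [h.twist_innerL_eq_one hbol hodd] using h.mul_mul_pow3 y z 1

end IsNormalOrderThree

end OrderThree

theorem IsNormalSubloop.isNormalOrderThree {Q : Type*} [QLoop Q] {H : Set Q}
    (hH : IsNormalSubloop H) (hcard : H.ncard = 3) {a : Q} (ha : a ∈ H) (ha1 : a ≠ 1) :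
    IsNormalOrderThree a := by
  obtain ⟨x, hx1, hxa, rfl⟩ :=
    Set.exists_eq_insert_insert_of_ncard_eq_three hcard hH.1.one_mem ha ha1.symm
  obtain ⟨rfl, hcube⟩ := hH.1.mul_self_eq_of_eq_insert ha1 hx1 hxa
  exact ⟨ha1, hx1, hcube, hH⟩

/-- In a finite right Bol loop of odd order, every normal subloop of
order 3 is contained in the center. -/
theorem stmt10 (Q : Type*) [QLoop Q] [Finite Q] (hbol : IsRightBol Q)
    (hodd : Odd (Nat.card Q)) (H : Set Q) (hH : IsNormalSubloop H)
    (hcard : H.ncard = 3) :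
    H ⊆ loopCenter Q := by
  intro c hc
  by_cases hc1 : c = 1
  · exact hc1 ▸ QLoop.one_mem_loopCenter
  · exact (hH.isNormalOrderThree hcard hc hc1).mem_loopCenter hbol hodd
end

section
/- Let Q be a right Bol loop of order 27 that is not an abelian group (i.e., · fails to be simultaneously associative and commutative). Then every normal subloop N of Q with |N| = 3 satisfies N = Z(Q). -/
/-!
A right Bol loop `Q` satisfies `R_x ^ n = R_{x ^ n}`, so it is power-associative, and when `|Q|` is
odd no `R_x` has even order: `R_x ^ m` would be a fixed-point-free involution. Hence every element
has odd order and is a square.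

Write a normal subloop of order three as `N = {1, a, a²}`. Normality lets one move `a`-factors
through products, so `(u a^i)(v a^j) = (uv) a^{α i + β j}` with `α, β ∈ (ZMod 3)ˣ` depending
on `u, v` (a Latin square of order three is affine). Specialising the Bol identity gives
`α(u,w) + 1 = β(u,w) (α(1,w) + 1)` and `α(1, (vw)v) = α(1,w)`; as every element is a square
`v v = (v 1) v`, all coefficients are `1` and `a` is central.

Conversely, if some central `c ∉ N` existed, the products `c^i n` would give `|Z(Q)| ≥ 9`, and
for `t ∉ Z(Q)` the `27` distinct products `t^i z` would exhaust `Q`, making `Q` an abelian group.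
-/

namespace QLoop

variable {Q : Type*} [QLoop Q]

theorem mul_left_cancel {a x y : Q} (h : a * x = a * y) : x = y :=
  (QLoop.bij_left a).1 h

theorem mul_right_cancel {a x y : Q} (h : x * a = y * a) : x = y :=
  (QLoop.bij_right a).1 h

end QLoop

section Powers

variable {Q : Type*} [QLoop Q]

@[simp]
theorem Rt_apply (x u : Q) : Rt x u = u * x := rfl

theorem lpow_one (x : Q) : lpow x 1 = x := QLoop.one_mul x

theorem lpow_two (x : Q) : lpow x 2 = x * x := by
  rw [lpow, lpow_one]

theorem one_lpow : ∀ n : ℕ, lpow (1 : Q) n = 1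
  | 0 => rfl
  | n + 1 => by rw [lpow, one_lpow n, QLoop.mul_one]

theorem lpow_eq_Rt_pow_apply (x : Q) : ∀ n : ℕ, lpow x n = (Rt x ^ n) 1
  | 0 => rfl
  | n + 1 => by rw [lpow, lpow_eq_Rt_pow_apply x n, pow_succ', Equiv.Perm.mul_apply, Rt_apply]

theorem lpow_mem {S : Set Q} (hS1 : (1 : Q) ∈ S)
    (hSmul : ∀ ⦃m n : Q⦄, m ∈ S → n ∈ S → m * n ∈ S)
    {x : Q} (hx : x ∈ S) : ∀ n : ℕ, lpow x n ∈ S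
  | 0 => hS1
  | n + 1 => hSmul (lpow_mem hS1 hSmul hx n) hx

theorem mul_lpow (hbol : IsRightBol Q) (x : Q) : ∀ (n : ℕ) (u : Q), u * lpow x n = (Rt x ^ n) u
  | 0, u => QLoop.mul_one u
  | 1, u => by rw [lpow_one, pow_one, Rt_apply]
  | n + 2, u => by
    have hx : x * lpow x n = lpow x (n + 1) := by
      rw [mul_lpow hbol x n x, lpow_eq_Rt_pow_apply x (n + 1), pow_succ, Equiv.Perm.mul_apply,
        Rt_apply, QLoop.one_mul]
    rw [lpow, ← hx, ← hbol, mul_lpow hbol x n (u * x), pow_succ, pow_succ',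
      Equiv.Perm.mul_apply, Equiv.Perm.mul_apply, Rt_apply, Rt_apply]

theorem Rt_lpow (hbol : IsRightBol Q) (x : Q) (n : ℕ) : Rt (lpow x n) = Rt x ^ n :=
  Equiv.ext (mul_lpow hbol x n)

theorem mul_lpow_add (hbol : IsRightBol Q) (u x : Q) (m n : ℕ) :
    u * lpow x (m + n) = (u * lpow x m) * lpow x n := by
  rw [mul_lpow hbol, mul_lpow hbol, mul_lpow hbol, add_comm, pow_add, Equiv.Perm.mul_apply]

theorem lpow_add (hbol : IsRightBol Q) (x : Q) (m n : ℕ) :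
    lpow x (m + n) = lpow x m * lpow x n := by
  simpa only [QLoop.one_mul] using mul_lpow_add hbol 1 x m n

theorem lpow_lpow (hbol : IsRightBol Q) (x : Q) (k m : ℕ) :
    lpow (lpow x k) m = lpow x (k * m) := by
  rw [lpow_eq_Rt_pow_apply (lpow x k), Rt_lpow hbol, ← pow_mul, lpow_eq_Rt_pow_apply]

theorem lpow_orderOf_Rt (x : Q) : lpow x (orderOf (Rt x)) = 1 := by
  rw [lpow_eq_Rt_pow_apply, pow_orderOf_eq_one, Equiv.Perm.one_apply]

end Powers

section OddOrder

variable {Q : Type*} [QLoop Q] [Finite Q]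

theorem odd_orderOf_Rt (hbol : IsRightBol Q) (hodd : Odd (Nat.card Q)) (x : Q) :
    Odd (orderOf (Rt x)) := by
  classical
  have := Fintype.ofFinite Q
  by_contra heven
  obtain ⟨m, hm⟩ := Nat.not_odd_iff_even.mp heven
  have hpos : 0 < orderOf (Rt x) := orderOf_pos _
  have hsq : (Rt (lpow x m)) ^ 2 = 1 := by
    rw [Rt_lpow hbol, ← pow_mul, mul_two, ← hm, pow_orderOf_eq_one]
  have hne : lpow x m ≠ 1 := by
    intro h
    refine pow_ne_one_of_lt_orderOf (x := Rt x) (n := m) (by omega) (by omega) ?_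
    rw [← Rt_lpow hbol, h]
    exact Equiv.ext QLoop.mul_one
  have hsupp : (Rt (lpow x m)).support = Finset.univ := by
    refine Finset.eq_univ_of_forall fun u => Equiv.Perm.mem_support.mpr fun h => hne ?_
    exact QLoop.mul_left_cancel (h.trans (QLoop.mul_one u).symm)
  have := Equiv.Perm.two_dvd_card_support hsq
  rw [hsupp, Finset.card_univ, ← Nat.card_eq_fintype_card] at this
  exact Nat.not_even_iff_odd.mpr hodd (even_iff_two_dvd.mpr this)

theorem lpow_lpow_two_half (hbol : IsRightBol Q) (hodd : Odd (Nat.card Q)) (x : Q) :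
    lpow (lpow x 2) ((orderOf (Rt x) + 1) / 2) = x := by
  obtain ⟨k, hk⟩ := odd_orderOf_Rt hbol hodd x
  rw [lpow_lpow hbol, hk, show 2 * ((2 * k + 1 + 1) / 2) = 2 * k + 1 + 1 by omega, lpow, ← hk,
    lpow_orderOf_Rt, QLoop.one_mul]

theorem exists_mul_self_eq (hbol : IsRightBol Q) (hodd : Odd (Nat.card Q)) (x : Q) :
    ∃ v : Q, v * v = x := by
  refine ⟨lpow x ((orderOf (Rt x) + 1) / 2), ?_⟩
  rw [← lpow_two, lpow_lpow hbol, mul_comm, ← lpow_lpow hbol, lpow_lpow_two_half hbol hodd]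

theorem mem_of_lpow_two_mem (hbol : IsRightBol Q) (hodd : Odd (Nat.card Q)) {S : Set Q}
    (hS1 : (1 : Q) ∈ S) (hSmul : ∀ ⦃m n : Q⦄, m ∈ S → n ∈ S → m * n ∈ S) {x : Q}
    (hx : lpow x 2 ∈ S) : x ∈ S :=
  lpow_lpow_two_half hbol hodd x ▸ lpow_mem hS1 hSmul hx _

theorem eq_one_of_mul_self_eq_one (hbol : IsRightBol Q) (hodd : Odd (Nat.card Q)) {x : Q}
    (hx : x * x = 1) : x = 1 := by
  refine mem_of_lpow_two_mem (S := {1}) hbol hodd rfl ?_ (by rw [lpow_two, hx]; rfl)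
  rintro m n rfl rfl
  exact QLoop.mul_one 1

theorem exists_mul_eq_one_mem {S : Set Q} (hbol : IsRightBol Q) (hS1 : (1 : Q) ∈ S)
    (hSmul : ∀ ⦃m n : Q⦄, m ∈ S → n ∈ S → m * n ∈ S) {m : Q} (hm : m ∈ S) :
    ∃ m' ∈ S, m * m' = 1 := by
  refine ⟨lpow m (orderOf (Rt m) - 1), lpow_mem hS1 hSmul hm _, ?_⟩
  have h := lpow_add hbol m 1 (orderOf (Rt m) - 1)
  rwa [lpow_one, Nat.add_sub_cancel' (orderOf_pos (Rt m)), lpow_orderOf_Rt, eq_comm] at h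

end OddOrder

namespace ZMod

theorem eq_add_sub_mul_of_injective {h : ZMod 3 → ZMod 3} (hh : Function.Injective h)
    (i : ZMod 3) : h i = h 0 + (h 1 - h 0) * i := by
  have key : ∀ h : ZMod 3 → ZMod 3, Function.Injective h →
      ∀ i, h i = h 0 + (h 1 - h 0) * i := by
    decide
  exact key h hh i

theorem eq_zero_of_forall_add_mul_ne_zero {c d : ZMod 3} (h : ∀ j, c + d * j ≠ 0) : d = 0 := by
  revert c d
  decide

theorem exists_eq_add_mul_add_mul_of_injective₂ {g : ZMod 3 → ZMod 3 → ZMod 3}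
    (hrow : ∀ i, Function.Injective (g i)) (hcol : ∀ j, Function.Injective (g · j)) :
    ∃ α β : ZMod 3, α ≠ 0 ∧ β ≠ 0 ∧ ∀ i j, g i j = g 0 0 + α * i + β * j := by
  have hslope : ∀ j, g 1 j - g 0 j = g 1 0 - g 0 0 := by
    have hrow_aff := fun i => eq_add_sub_mul_of_injective (hrow i)
    have hd : (g 1 1 - g 1 0) - (g 0 1 - g 0 0) = 0 := by
      refine eq_zero_of_forall_add_mul_ne_zero (c := g 1 0 - g 0 0) fun j h => ?_
      have hne : g 1 j ≠ g 0 j := fun h' => one_ne_zero (hcol j h')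
      exact hne (by linear_combination hrow_aff 1 j - hrow_aff 0 j + h)
    intro j
    linear_combination hrow_aff 1 j - hrow_aff 0 j + j * hd
  refine ⟨g 1 0 - g 0 0, g 0 1 - g 0 0, fun h => one_ne_zero (hcol 0 (sub_eq_zero.mp h)),
    fun h => one_ne_zero (hrow 0 (sub_eq_zero.mp h)), fun i j => ?_⟩
  linear_combination eq_add_sub_mul_of_injective (hcol j) i + i * hslope j +
    eq_add_sub_mul_of_injective (hrow 0) j

theorem three_cases_s12 (i : ZMod 3) : i = 0 ∨ i = 1 ∨ i = 2 := by
  revert i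
  decide

end ZMod

section Order3

variable {Q : Type*} [QLoop Q] {a : Q}

/-- Powers of `a` indexed by `ZMod 3`, meant for `a` with `a ^ 3 = 1`. -/
noncomputable def apow (a : Q) (i : ZMod 3) : Q := lpow a i.val

@[simp]
theorem apow_zero : apow a 0 = 1 := rfl

theorem apow_one : apow a 1 = a := lpow_one a

theorem apow_two : apow a 2 = a * a := lpow_two a

theorem apow_mem {S : Set Q} (hS1 : (1 : Q) ∈ S)
    (hSmul : ∀ ⦃m n : Q⦄, m ∈ S → n ∈ S → m * n ∈ S)
    (ha : a ∈ S) (i : ZMod 3) : apow a i ∈ S :=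
  lpow_mem hS1 hSmul ha i.val

theorem mul_apow_mul_apow (hbol : IsRightBol Q) (ha3 : lpow a 3 = 1) (u : Q) (i j : ZMod 3) :
    (u * apow a i) * apow a j = u * apow a (i + j) := by
  have hmod : ∀ n : ℕ, u * lpow a n = u * lpow a (n % 3) := fun n => by
    conv_lhs => rw [← Nat.div_add_mod n 3]
    rw [mul_lpow_add hbol, ← lpow_lpow hbol, ha3, one_lpow, QLoop.mul_one]
  rw [apow, apow, apow, ← mul_lpow_add hbol, ZMod.val_add, ← hmod]

theorem apow_injective [Finite Q] (hbol : IsRightBol Q) (hodd : Odd (Nat.card Q)) (ha : a ≠ 1) :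
    Function.Injective (apow a) := by
  have haa : a * a ≠ 1 := fun h => ha (eq_one_of_mul_self_eq_one hbol hodd h)
  have haa' : a * a ≠ a := fun h => ha (QLoop.mul_left_cancel (h.trans (QLoop.mul_one a).symm))
  intro i j h
  rcases ZMod.three_cases_s12 i with rfl | rfl | rfl <;>
    rcases ZMod.three_cases_s12 j with rfl | rfl | rfl <;>
    simp only [apow_zero, apow_one, apow_two] at h <;>
    first | rfl | exact absurd h ‹_› | exact absurd h.symm ‹_›

theorem IsSubloop.exists_eq_range_apow [Finite Q] (hbol : IsRightBol Q)
    (hodd : Odd (Nat.card Q)) {N : Set Q} (hN : IsSubloop N) (hN3 : N.ncard = 3) :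
    ∃ a : Q, a ≠ 1 ∧ lpow a 3 = 1 ∧ N = Set.range (apow a) := by
  obtain ⟨a, haN, ha⟩ := Set.exists_ne_of_one_lt_ncard (by omega : 1 < N.ncard) (1 : Q)
  have hrange : N = Set.range (apow a) := by
    refine (Set.eq_of_subset_of_ncard_le ?_ ?_ (Set.toFinite N)).symm
    · rintro _ ⟨i, rfl⟩
      exact apow_mem hN.one_mem hN.mul_mem haN i
    · rw [Set.ncard_range_of_injective (apow_injective hbol hodd ha), hN3, Nat.card_zmod]
  refine ⟨a, ha, ?_, hrange⟩
  obtain ⟨i, hi⟩ : lpow a 3 ∈ Set.range (apow a) :=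
    hrange ▸ lpow_mem hN.one_mem hN.mul_mem haN 3
  have h3 : lpow a 3 = (a * a) * a := by rw [lpow, lpow_two]
  rcases ZMod.three_cases_s12 i with rfl | rfl | rfl
  · exact hi.symm
  · refine absurd (eq_one_of_mul_self_eq_one hbol hodd (QLoop.mul_right_cancel (a := a) ?_)) ha
    rw [← h3, QLoop.one_mul, ← hi]
    exact apow_one
  · refine absurd (QLoop.mul_left_cancel (a := a * a) ?_) ha
    rw [← h3, QLoop.mul_one, ← hi]
    exact apow_two

end Order3

section Normal

variable {Q : Type*} [QLoop Q]

theorem Rt_inner_mem_innGroup (x y : Q) : (Rt (y * x))⁻¹ * Rt x * Rt y ∈ innGroup Q :=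
  Subgroup.subset_closure (Set.mem_union_left _ (Set.mem_union_left _ ⟨x, y, rfl⟩))

theorem Lt_inner_mem_innGroup (x y : Q) : (Lt (x * y))⁻¹ * Lt x * Lt y ∈ innGroup Q :=
  Subgroup.subset_closure (Set.mem_union_left _ (Set.mem_union_right _ ⟨x, y, rfl⟩))

theorem Lt_inv_mul_Rt_mem_innGroup (x : Q) : (Lt x)⁻¹ * Rt x ∈ innGroup Q :=
  Subgroup.subset_closure (Set.mem_union_right _ ⟨x, rfl⟩)

variable {N : Set Q}

theorem IsNormalSubloop.apply_mem (hN : IsNormalSubloop N) {φ : Equiv.Perm Q}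
    (hφ : φ ∈ innGroup Q) {n : Q} (hn : n ∈ N) : φ n ∈ N :=
  hN.2 φ hφ ▸ Set.mem_image_of_mem φ hn

theorem mul_Lt_inv_mul_Rt_apply (x u : Q) : x * ((Lt x)⁻¹ * Rt x) u = u * x :=
  (Lt x).apply_symm_apply (u * x)

theorem IsNormalSubloop.exists_mul_eq_mul_right (hN : IsNormalSubloop N) (x : Q) {n : Q}
    (hn : n ∈ N) : ∃ n' ∈ N, n * x = x * n' :=
  ⟨_, hN.apply_mem (Lt_inv_mul_Rt_mem_innGroup x) hn, (mul_Lt_inv_mul_Rt_apply x n).symm⟩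

theorem IsNormalSubloop.exists_mul_eq_mul_left (hN : IsNormalSubloop N) (x : Q) {n : Q}
    (hn : n ∈ N) : ∃ n' ∈ N, x * n = n' * x := by
  set φ := (Lt x)⁻¹ * Rt x
  refine ⟨φ⁻¹ n, hN.apply_mem (inv_mem (Lt_inv_mul_Rt_mem_innGroup x)) hn, ?_⟩
  rw [← mul_Lt_inv_mul_Rt_apply x (φ⁻¹ n)]
  exact congrArg (x * ·) (φ.apply_symm_apply n).symm

theorem IsNormalSubloop.exists_mul_mul_eq_mul_mul_right (hN : IsNormalSubloop N) (x y : Q) {m : Q}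
    (hm : m ∈ N) : ∃ m' ∈ N, x * (y * m) = (x * y) * m' :=
  ⟨_, hN.apply_mem (Lt_inner_mem_innGroup x y) hm,
    ((Lt (x * y)).apply_symm_apply (x * (y * m))).symm⟩

theorem IsNormalSubloop.exists_mul_mul_eq_mul_mul_left (hN : IsNormalSubloop N) (u y : Q) {n : Q}
    (hn : n ∈ N) : ∃ n' ∈ N, (n * u) * y = n' * (u * y) :=
  ⟨_, hN.apply_mem (Rt_inner_mem_innGroup y u) hn,
    ((Rt (u * y)).apply_symm_apply ((n * u) * y)).symm⟩

end Normal

section Coefficients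

variable {Q : Type*} [QLoop Q] {a : Q}

theorem exists_mul_apow_mul_mul_apow (hbol : IsRightBol Q) (ha3 : lpow a 3 = 1)
    (hN : IsNormalSubloop (Set.range (apow a))) (u v : Q) (i j : ZMod 3) :
    ∃ k : ZMod 3, (u * apow a i) * (v * apow a j) = (u * v) * apow a k := by
  obtain ⟨_, ⟨k₂, rfl⟩, hL⟩ := hN.exists_mul_mul_eq_mul_mul_right (u * apow a i) v ⟨j, rfl⟩
  obtain ⟨n₁, hn₁, h₁⟩ := hN.exists_mul_eq_mul_left u ⟨i, rfl⟩
  obtain ⟨n₂, hn₂, h₂⟩ := hN.exists_mul_mul_eq_mul_mul_left u v hn₁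
  obtain ⟨_, ⟨k₁, rfl⟩, h₃⟩ := hN.exists_mul_eq_mul_right (u * v) hn₂
  exact ⟨k₁ + k₂, by rw [hL, h₁, h₂, h₃, mul_apow_mul_apow hbol ha3]⟩

def ApowCoeffs (a : Q) (α β : Q → Q → ZMod 3) : Prop :=
  ∀ u v i j, (u * apow a i) * (v * apow a j) = (u * v) * apow a (α u v * i + β u v * j)

/-- The exponent `k` in `(u a^i)(v a^j) = (uv) a^k` is a Latin square in `(i, j)`, hence
linear. -/
theorem exists_apowCoeffs [Finite Q] (hbol : IsRightBol Q) (hodd : Odd (Nat.card Q)) (ha : a ≠ 1)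
    (ha3 : lpow a 3 = 1) (hN : IsNormalSubloop (Set.range (apow a))) :
    ∃ α β : Q → Q → ZMod 3, (∀ u v, α u v ≠ 0) ∧ (∀ u v, β u v ≠ 0) ∧ ApowCoeffs a α β := by
  have hinj := apow_injective hbol hodd ha
  have hlin : ∀ u v : Q, ∃ α β : ZMod 3, α ≠ 0 ∧ β ≠ 0 ∧
      ∀ i j, (u * apow a i) * (v * apow a j) = (u * v) * apow a (α * i + β * j) := fun u v => by
    choose g hg using exists_mul_apow_mul_mul_apow hbol ha3 hN u v
    have hg00 : g 0 0 = 0 := hinj <| QLoop.mul_left_cancel (a := u * v) <| by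
      rw [← hg, apow_zero, QLoop.mul_one, QLoop.mul_one, QLoop.mul_one]
    have hrow : ∀ i, Function.Injective (g i) := fun i j j' h =>
      hinj <| QLoop.mul_left_cancel <| QLoop.mul_left_cancel (a := u * apow a i) <| by
        rw [hg, hg, h]
    have hcol : ∀ j, Function.Injective (g · j) := fun j i i' h =>
      hinj <| QLoop.mul_left_cancel <| QLoop.mul_right_cancel (a := v * apow a j) <| by
        rw [hg, hg]
        exact congrArg (u * v * apow a ·) h
    obtain ⟨α, β, hα, hβ, hαβ⟩ := ZMod.exists_eq_add_mul_add_mul_of_injective₂ hrow hcol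
    exact ⟨α, β, hα, hβ, fun i j => by rw [hg, hαβ, hg00, zero_add]⟩
  choose α β hα hβ hspec using hlin
  exact ⟨α, β, hα, hβ, hspec⟩

variable {α β : Q → Q → ZMod 3}

theorem ApowCoeffs.right_one (hbol : IsRightBol Q) (ha3 : lpow a 3 = 1)
    (hinj : Function.Injective (apow a)) (hspec : ApowCoeffs a α β) (u : Q) :
    α u 1 = 1 ∧ β u 1 = 1 := by
  have h : ∀ i j, α u 1 * i + β u 1 * j = i + j := fun i j => by
    have := hspec u 1 i j
    rw [QLoop.one_mul, mul_apow_mul_apow hbol ha3, QLoop.mul_one] at this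
    exact hinj (QLoop.mul_left_cancel this.symm)
  exact ⟨by simpa using h 1 0, by simpa using h 0 1⟩

/-- The right Bol identity for `x = u a^i`, `y = v a^j`, `z = w a^k`, read off in the exponents. -/
theorem ApowCoeffs.bol (hbol : IsRightBol Q) (hinj : Function.Injective (apow a))
    (hspec : ApowCoeffs a α β) (u v w : Q) (i j k : ZMod 3) :
    α ((u * v) * w) v * (α (u * v) w * (α u v * i + β u v * j) + β (u * v) w * k)
        + β ((u * v) * w) v * j
      = α u ((v * w) * v) * i
        + β u ((v * w) * v) * (α (v * w) v * (α v w * j + β v w * k) + β (v * w) v * j) := by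
  have h := hbol (u * apow a i) (v * apow a j) (w * apow a k)
  rw [hspec u v, hspec (u * v) w, hspec ((u * v) * w) v, hspec v w, hspec (v * w) v,
    hspec u ((v * w) * v), hbol u v w] at h
  exact hinj (QLoop.mul_left_cancel h)

theorem ApowCoeffs.eq_one [Finite Q] (hbol : IsRightBol Q) (hodd : Odd (Nat.card Q)) (ha : a ≠ 1)
    (ha3 : lpow a 3 = 1) (hα : ∀ u v, α u v ≠ 0) (hβ : ∀ u v, β u v ≠ 0)
    (hspec : ApowCoeffs a α β) (u v : Q) : α u v = 1 ∧ β u v = 1 := by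
  have hinj := apow_injective hbol hodd ha
  have h1 := hspec.right_one hbol ha3 hinj
  have hβα : ∀ u w, α u w + 1 = β u w * (α 1 w + 1) := fun u w => by
    have h := hspec.bol hbol hinj u 1 w 0 1 0
    simp only [QLoop.mul_one, QLoop.one_mul, (h1 _).1, (h1 _).2] at h
    linear_combination h
  have hαα : ∀ u w, α u w = α 1 w := fun u w => by
    have key : ∀ p q s : ZMod 3, p ≠ 0 → q ≠ 0 → s ≠ 0 →
        p + 1 = q * (s + 1) → p = s := by
      decide
    exact key _ _ _ (hα u w) (hβ u w) (hα 1 w) (hβα u w)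
  have hconj : ∀ v w, α 1 ((v * w) * v) = α 1 w := fun v w => by
    have h := hspec.bol hbol hinj 1 v w 1 0 0
    simp only [QLoop.one_mul, mul_one, mul_zero, add_zero] at h
    have key : ∀ s t : ZMod 3, s ≠ 0 → s * t * s = t := by decide
    rw [← h, hαα (v * w), hαα v, ← mul_assoc, key _ _ (hα 1 v)]
  have hα1 : ∀ w, α 1 w = 1 := fun w => by
    obtain ⟨v, rfl⟩ := exists_mul_self_eq hbol hodd w
    simpa only [QLoop.mul_one, (h1 1).1] using hconj v 1
  have hαu : α u v = 1 := (hαα u v).trans (hα1 v)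
  refine ⟨hαu, ?_⟩
  have key : ∀ q : ZMod 3, 1 + 1 = q * (1 + 1) → q = 1 := by decide
  have h := hβα u v
  rw [hαu, hα1 v] at h
  exact key _ h

end Coefficients

section Center

variable {Q : Type*} [QLoop Q] {c : Q}

theorem loopCenter_comm (hc : c ∈ loopCenter Q) (y : Q) : c * y = y * c := (hc y y).1

theorem loopCenter_left_assoc (hc : c ∈ loopCenter Q) (y z : Q) : c * (y * z) = (c * y) * z :=
  (hc y z).2.1

theorem loopCenter_mid_assoc (hc : c ∈ loopCenter Q) (y z : Q) : y * (c * z) = (y * c) * z :=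
  (hc y z).2.2.1

theorem loopCenter_right_assoc (hc : c ∈ loopCenter Q) (y z : Q) : y * (z * c) = (y * z) * c :=
  (hc y z).2.2.2

theorem one_mem_loopCenter : (1 : Q) ∈ loopCenter Q := fun y z =>
  ⟨by rw [QLoop.one_mul, QLoop.mul_one], by rw [QLoop.one_mul, QLoop.one_mul],
    by rw [QLoop.one_mul, QLoop.mul_one], by rw [QLoop.mul_one, QLoop.mul_one]⟩

theorem mul_mem_loopCenter {z w : Q} (hz : z ∈ loopCenter Q) (hw : w ∈ loopCenter Q) :
    z * w ∈ loopCenter Q := fun y s =>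
  ⟨by rw [← loopCenter_left_assoc hz, loopCenter_comm hw, loopCenter_left_assoc hz,
      loopCenter_comm hz, loopCenter_right_assoc hw],
    by rw [← loopCenter_left_assoc hz, loopCenter_left_assoc hw, loopCenter_left_assoc hz,
      loopCenter_left_assoc hz],
    by rw [← loopCenter_left_assoc hz, loopCenter_mid_assoc hz, loopCenter_mid_assoc hw,
      loopCenter_right_assoc hw],
    by rw [loopCenter_right_assoc hw s z, loopCenter_right_assoc hw, loopCenter_right_assoc hz,
      ← loopCenter_right_assoc hw]⟩

theorem apow_mem_loopCenter {a : Q}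
    (hmul : ∀ u v i j, (u * apow a i) * (v * apow a j) = (u * v) * apow a (i + j)) (i : ZMod 3) :
    apow a i ∈ loopCenter Q := by
  have hcomm : ∀ y, apow a i * y = y * apow a i := fun y => by
    simpa only [apow_zero, QLoop.mul_one, QLoop.one_mul, add_zero] using hmul 1 y i 0
  have hleft : ∀ y z, (y * apow a i) * z = (y * z) * apow a i := fun y z => by
    simpa only [apow_zero, QLoop.mul_one, add_zero] using hmul y z i 0
  have hright : ∀ y z, y * (z * apow a i) = (y * z) * apow a i := fun y z => by
    simpa only [apow_zero, QLoop.mul_one, zero_add] using hmul y z 0 i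
  refine fun y z => ⟨hcomm y, ?_, ?_, hright y z⟩
  · rw [hcomm, hcomm y, hleft]
  · rw [hcomm z, hright, hleft]

theorem IsNormalSubloop.subset_loopCenter [Finite Q] (hbol : IsRightBol Q)
    (hodd : Odd (Nat.card Q)) {N : Set Q} (hN : IsNormalSubloop N) (hN3 : N.ncard = 3) :
    N ⊆ loopCenter Q := by
  obtain ⟨a, ha, ha3, rfl⟩ := hN.1.exists_eq_range_apow hbol hodd hN3
  obtain ⟨α, β, hα, hβ, hspec⟩ := exists_apowCoeffs hbol hodd ha ha3 hN
  have hmul : ∀ u v i j, (u * apow a i) * (v * apow a j) = (u * v) * apow a (i + j) :=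
    fun u v i j => by
      obtain ⟨h₁, h₂⟩ := hspec.eq_one hbol hodd ha ha3 hα hβ u v
      rw [hspec, h₁, h₂, one_mul, one_mul]
  rintro _ ⟨i, rfl⟩
  exact apow_mem_loopCenter hmul i

end Center

section CentralCosets

variable {Q : Type*} [QLoop Q]

theorem lpow_mul_mul_lpow_mul (hbol : IsRightBol Q) (t : Q) (i j : ℕ) {n m : Q}
    (hn : n ∈ loopCenter Q) (hm : m ∈ loopCenter Q) :
    (lpow t i * n) * (lpow t j * m) = lpow t (i + j) * (n * m) := by
  rw [loopCenter_right_assoc hm, ← loopCenter_mid_assoc hn, loopCenter_comm hn,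
    loopCenter_right_assoc hn, ← lpow_add hbol, ← loopCenter_right_assoc hm]

theorem assoc_comm_of_forall_eq_lpow_mul (hbol : IsRightBol Q) (t : Q)
    (hrep : ∀ q : Q, ∃ (i : ℕ) (m : Q), m ∈ loopCenter Q ∧ q = lpow t i * m) :
    (∀ x y z : Q, x * (y * z) = (x * y) * z) ∧ (∀ x y : Q, x * y = y * x) := by
  constructor
  · intro x y z
    obtain ⟨i, n, hn, rfl⟩ := hrep x
    obtain ⟨j, m, hm, rfl⟩ := hrep y
    obtain ⟨k, p, hp, rfl⟩ := hrep z
    rw [lpow_mul_mul_lpow_mul hbol t j k hm hp,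
      lpow_mul_mul_lpow_mul hbol t i (j + k) hn (mul_mem_loopCenter hm hp),
      lpow_mul_mul_lpow_mul hbol t i j hn hm,
      lpow_mul_mul_lpow_mul hbol t (i + j) k (mul_mem_loopCenter hn hm) hp,
      Nat.add_assoc, loopCenter_left_assoc hn]
  · intro x y
    obtain ⟨i, n, hn, rfl⟩ := hrep x
    obtain ⟨j, m, hm, rfl⟩ := hrep y
    rw [lpow_mul_mul_lpow_mul hbol t i j hn hm, lpow_mul_mul_lpow_mul hbol t j i hm hn,
      Nat.add_comm, loopCenter_comm hn]

variable [Finite Q] {S : Set Q}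

theorem lpow_mul_injective (hbol : IsRightBol Q) (hodd : Odd (Nat.card Q)) (hS1 : (1 : Q) ∈ S)
    (hSmul : ∀ ⦃m n : Q⦄, m ∈ S → n ∈ S → m * n ∈ S) (hSZ : S ⊆ loopCenter Q) {t : Q}
    (ht : t ∉ S) : Function.Injective (fun p : Fin 3 × S => lpow t p.1 * p.2) := by
  have hpow : ∀ d, 0 < d → d < 3 → lpow t d ∉ S := fun d hd0 hd3 hd => by
    interval_cases d
    · exact ht (lpow_one t ▸ hd)
    · exact ht (mem_of_lpow_two_mem hbol hodd hS1 hSmul hd)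
  have key : ∀ (i j : Fin 3) {m n : Q}, m ∈ S → n ∈ S → i ≤ j →
      lpow t i * m = lpow t j * n → i = j ∧ m = n := by
    intro i j m n hm hn hij h
    obtain ⟨d, hd⟩ := Nat.exists_eq_add_of_le (Fin.le_def.mp hij)
    have hm' : m = lpow t d * n := QLoop.mul_left_cancel <| by
      rw [h, hd, lpow_add hbol, loopCenter_right_assoc (hSZ hn)]
    obtain ⟨n', hn', hnn'⟩ := exists_mul_eq_one_mem hbol hS1 hSmul hn
    have hd0 : d = 0 := by
      by_contra hd0
      refine hpow d (Nat.pos_of_ne_zero hd0) (by omega) ?_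
      rw [← QLoop.mul_one (lpow t d), ← hnn', loopCenter_right_assoc (hSZ hn'), ← hm']
      exact hSmul hm hn'
    subst hd0
    exact ⟨Fin.ext hd.symm, hm'.trans (QLoop.one_mul n)⟩
  rintro ⟨i, m⟩ ⟨j, n⟩ h
  rcases le_total i j with hij | hji
  · obtain ⟨rfl, hmn⟩ := key i j m.2 n.2 hij h
    exact Prod.ext rfl (Subtype.ext hmn)
  · obtain ⟨rfl, hmn⟩ := key j i n.2 m.2 hji h.symm
    exact Prod.ext rfl (Subtype.ext hmn.symm)

end CentralCosets

theorem loopCenter_subset_of_ncard_eq_three {Q : Type*} [QLoop Q] (hbol : IsRightBol Q)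
    (hcard : Nat.card Q = 27)
    (hna : ¬ ((∀ x y z : Q, x * (y * z) = (x * y) * z) ∧ (∀ x y : Q, x * y = y * x)))
    {N : Set Q} (hN : IsSubloop N) (hNZ : N ⊆ loopCenter Q) (hN3 : N.ncard = 3) :
    loopCenter Q ⊆ N := by
  have : Finite Q := Nat.finite_of_card_ne_zero (by omega)
  have hodd : Odd (Nat.card Q) := hcard ▸ by decide
  intro c hc
  by_contra hcN
  have hcard_prod : ∀ S : Set Q, Nat.card (Fin 3 × S) = 3 * Nat.card S := fun S => by
    rw [Nat.card_prod, Nat.card_fin]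
  have h9 : 9 ≤ Nat.card (loopCenter Q) := by
    have hinj := lpow_mul_injective hbol hodd hN.one_mem hN.mul_mem hNZ hcN
    have := Nat.card_le_card_of_injective
      (fun p : Fin 3 × N => (⟨lpow c p.1 * p.2, mul_mem_loopCenter
        (lpow_mem one_mem_loopCenter (fun _ _ => mul_mem_loopCenter) hc _) (hNZ p.2.2)⟩ :
          loopCenter Q))
      fun p q h => hinj (congrArg Subtype.val h)
    rwa [hcard_prod, Nat.card_coe_set_eq, hN3] at this
  apply hna
  by_cases hall : ∀ q : Q, q ∈ loopCenter Q
  · exact assoc_comm_of_forall_eq_lpow_mul hbol 1 fun q =>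
      ⟨0, q, hall q, (QLoop.one_mul q).symm⟩
  push Not at hall
  obtain ⟨t, ht⟩ := hall
  have hinj := lpow_mul_injective hbol hodd one_mem_loopCenter
    (fun _ _ => mul_mem_loopCenter) subset_rfl ht
  have hle := Nat.card_le_card_of_injective _ hinj
  rw [hcard_prod, hcard] at hle
  have hsurj := ((Nat.bijective_iff_injective_and_card _).mpr
    ⟨hinj, by rw [hcard_prod, hcard]; omega⟩).2
  refine assoc_comm_of_forall_eq_lpow_mul hbol t fun q => ?_
  obtain ⟨⟨i, m⟩, hq⟩ := hsurj q
  exact ⟨i, m, m.2, hq.symm⟩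

/-- In a right Bol loop of order 27 which is not an abelian group,
every normal subloop of order 3 equals the center. -/
theorem stmt12 (Q : Type*) [QLoop Q] (hbol : IsRightBol Q)
    (hcard : Nat.card Q = 27)
    (hna : ¬ ((∀ x y z : Q, x * (y * z) = (x * y) * z) ∧ (∀ x y : Q, x * y = y * x)))
    (N : Set Q) (hN : IsNormalSubloop N) (hNcard : N.ncard = 3) :
    N = loopCenter Q := by
  have : Finite Q := Nat.finite_of_card_ne_zero (by omega)
  have hNZ := hN.subset_loopCenter hbol (hcard ▸ by decide) hNcard
  exact hNZ.antisymm (loopCenter_subset_of_ncard_eq_three hbol hcard hna hN.1 hNZ hNcard)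
end
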